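/- Let π be a context adaptive ordering family over Σ and let s and s' be primitive strings of the same length n over Σ with BWT*(s) = BWT*(s') (both computed with respect to π). If the row index of s in M*(s) equals the row index of s' in M*(s'), then s = s'. In other words, a primitive string is uniquely determined by its context adaptive BWT together with the position of the string itself in the sorted rotation matrix. -/

import Mathlib

/-- The cyclic rotation of `s` by `r`: `s[r+1..n] s[1..r]`. -/
def rot {α : Type*} (s : List α) (r : ℕ) : List α := s.drop r ++ s.take r

/-- A string is primitive if its cyclic rotations are pairwise distinct. -/
def IsPrimitive {α : Type*} (s : List α) : Prop :=
  ∀ r₁ r₂ : ℕ, r₁ < s.length → r₂ < s.length → rot s r₁ = rot s r₂ → r₁ = r₂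

/-- The context adaptive order induced by a family `π` of linear orders on the
alphabet, one for each string (context): `u ≺ v` iff, `x = u[1..k] = v[1..k]`
being the longest common prefix of `u` and `v`, the symbol `u[k+1]` is
`π x`-smaller than `v[k+1]`. -/
def caLt {α : Type*} (π : List α → LinearOrder α) (u v : List α) : Prop :=
  ∃ (k : ℕ) (hu : k < u.length) (hv : k < v.length),
    u.take k = v.take k ∧ (π (u.take k)).lt (u.get ⟨k, hu⟩) (v.get ⟨k, hv⟩)

/-- The matrix `M*(s)`: an enumeration of the cyclic rotations of `s`
listed in `≺`-increasing order; the `i`-th row is `row i`. -/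
structure SortedRotMatrix {α : Type*} (π : List α → LinearOrder α) (s : List α) where
  row : Fin s.length → List α
  row_is_rot : ∀ i, ∃ r : Fin s.length, row i = rot s (r : ℕ)
  rot_is_row : ∀ r : Fin s.length, ∃ i, row i = rot s (r : ℕ)
  sorted : ∀ i j : Fin s.length, i < j → caLt π (row i) (row j)

/-- `Rng M x`: the set of row indices of `M*(s)` whose row has `x` as a prefix. -/
def Rng {α : Type*} [DecidableEq α] {π : List α → LinearOrder α} {s : List α}
    (M : SortedRotMatrix π s) (x : List α) : Finset (Fin s.length) :=
  Finset.univ.filter (fun i => x <+: M.row i)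

/-!
Induction on `k`: the first `k` columns of `M*(s)` and `M*(s')` agree. Rotating a row by one
moves its first symbol to the end, so the rows beginning with `c :: y` correspond to the rows
beginning with `y` and ending with `c`; hence the last column and the first `k` columns fix how
many rows begin with each word of length `k + 1`. Inside the block of rows with a common prefix
`x` of length `k`, column `k + 1` is sorted in the order `π x`, so it is determined by these
counts. For `k = n` the two matrices coincide, and the common row index gives `s = s'`.
-/

open Finset

theorem eqOn_of_monotoneOn_of_card_filter_eq {ι β : Type*} [LinearOrder ι] [PartialOrder β]
    [DecidableEq β] {I : Finset ι} {f g : ι → β} (hf : MonotoneOn f I) (hg : MonotoneOn g I)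
    (hcard : ∀ b, #{i ∈ I | f i = b} = #{i ∈ I | g i = b}) : Set.EqOn f g I := by
  set l := I.sort (· ≤ ·)
  have hsorted {h : ι → β} (hh : MonotoneOn h I) : (l.map h).Pairwise (· ≤ ·) := by
    refine List.pairwise_map.mpr ((Finset.pairwise_sort I _).imp_of_mem ?_)
    intro a b ha hb hab
    exact hh (Finset.mem_sort _ |>.mp ha) (Finset.mem_sort _ |>.mp hb) hab
  have hperm : (l.map f).Perm (l.map g) := by
    rw [← Multiset.coe_eq_coe, ← Multiset.map_coe, ← Multiset.map_coe, Finset.sort_eq]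
    ext b
    simp only [Multiset.count_map, eq_comm (a := b)]
    exact hcard b
  have hmap : l.map f = l.map g :=
    hperm.eq_of_pairwise (fun _ _ _ _ => le_antisymm) (hsorted hf) (hsorted hg)
  exact fun i hi => List.map_eq_map_iff.mp hmap i (Finset.mem_sort _ |>.mpr hi)

namespace List

variable {α : Type*}

theorem cons_prefix_iff_prefix_rotate_one {c : α} {y t : List α} (hy : y.length < t.length) :
    c :: y <+: t ↔ y <+: t.rotate 1 ∧ (t.rotate 1).getLast? = some c := by
  cases t with
  | nil => simp at hy
  | cons a t =>
    have hyt : y ≠ t ++ [a] := fun h => by simp [h] at hy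
    simp [cons_prefix_cons, prefix_concat_iff, hyt, and_comm, eq_comm]

theorem append_singleton_prefix_iff {x l : List α} {d : α} (h : x.length < l.length) :
    x ++ [d] <+: l ↔ x <+: l ∧ l[x.length] = d := by
  constructor
  · intro hxd
    refine ⟨(prefix_append x [d]).trans hxd, ?_⟩
    simpa using (hxd.getElem (i := x.length) (by simp)).symm
  · rintro ⟨hx, rfl⟩
    nth_rewrite 1 [prefix_iff_eq_take.mp hx]
    rw [take_concat_get']
    exact take_prefix _ _

end List

section

variable {α : Type*} {π : List α → LinearOrder α}

theorem caLt_irrefl (u : List α) : ¬ caLt π u u := by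
  rintro ⟨k, _, _, -, hlt⟩
  exact @lt_irrefl _ (π _).toPreorder _ hlt

theorem caLt.le_getElem_of_prefix {u v x : List α} (h : caLt π u v) (hu : x <+: u)
    (hv : x <+: v) (hxu : x.length < u.length) (hxv : x.length < v.length) :
    (π x).le u[x.length] v[x.length] := by
  obtain ⟨m, hmu, hmv, htake, hlt⟩ := h
  simp only [List.get_eq_getElem] at hlt
  rcases lt_trichotomy m x.length with hm | rfl | hm
  · have : u[m] = v[m] := by rw [← hu.getElem hm, ← hv.getElem hm]
    rw [this] at hlt
    exact absurd hlt (@lt_irrefl _ (π _).toPreorder _)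
  · rw [← List.prefix_iff_eq_take.mp hu] at hlt
    exact @le_of_lt _ (π x).toPreorder _ _ hlt
  · have : u[x.length] = v[x.length] := by
      simpa [List.getElem?_take, hm, hxu, hxv] using congrArg (·[x.length]?) htake
    rw [this]
    exact (π x).le_refl _

theorem rot_eq_rotate {s : List α} {r : ℕ} (hr : r ≤ s.length) : rot s r = s.rotate r :=
  (List.rotate_eq_drop_append_take hr).symm

structure IsSortedRotFamily (π : List α → LinearOrder α) {n : ℕ} (A : Fin n → List α) :
    Prop where
  length_eq : ∀ i, (A i).length = n
  sorted : ∀ i j, i < j → caLt π (A i) (A j)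
  exists_perm_rotate_one : ∃ σ : Equiv.Perm (Fin n), ∀ i, A (σ i) = (A i).rotate 1

theorem prefix_append_singleton_iff_of_card_eq [DecidableEq α] {n : ℕ} {A B : Fin n → List α}
    (hA : ∀ i j, i < j → caLt π (A i) (A j)) (hB : ∀ i j, i < j → caLt π (B i) (B j))
    {x : List α} (hxA : ∀ i, x.length < (A i).length) (hxB : ∀ i, x.length < (B i).length)
    (hx : ∀ i, x <+: A i ↔ x <+: B i)
    (hcard : ∀ d, #{i | x ++ [d] <+: A i} = #{i | x ++ [d] <+: B i}) (d : α) (i : Fin n) :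
    x ++ [d] <+: A i ↔ x ++ [d] <+: B i := by
  have hcol : Set.EqOn (fun j => (A j)[x.length]'(hxA j)) (fun j => (B j)[x.length]'(hxB j))
      (({j | x <+: A j} : Finset (Fin n)) : Set (Fin n)) := by
    let _ := π x
    have hmono {C : Fin n → List α} (hC : ∀ i j, i < j → caLt π (C i) (C j))
        (hxC : ∀ i, x.length < (C i).length) :
        MonotoneOn (fun j => (C j)[x.length]'(hxC j)) {j | x <+: C j} := by
      intro j hj k hk hjk
      rcases hjk.lt_or_eq with hjk | rfl
      · exact (hC j k hjk).le_getElem_of_prefix hj hk (hxC j) (hxC k)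
      · exact le_rfl
    refine eqOn_of_monotoneOn_of_card_filter_eq (ι := Fin n) (β := α) ?_ ?_ fun e => ?_
    · simpa using hmono hA hxA
    · simpa [hx] using hmono hB hxB
    · convert hcard e using 2 <;> ext j <;>
        simp only [mem_filter, mem_univ, true_and, List.append_singleton_prefix_iff (hxA j),
          List.append_singleton_prefix_iff (hxB j), hx]
  rw [List.append_singleton_prefix_iff (hxA i), List.append_singleton_prefix_iff (hxB i), ← hx i]
  by_cases hi : x <+: A i
  · simp only [hi, true_and, hcol (by simpa using hi)]
  · simp only [hi, false_and]

namespace IsSortedRotFamily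

variable {n : ℕ} {A B : Fin n → List α}

theorem card_cons_prefix [DecidableEq α] (hA : IsSortedRotFamily π A) (c : α) {y : List α}
    (hy : y.length < n) :
    #{i | c :: y <+: A i} = #{i | y <+: A i ∧ (A i).getLast? = some c} := by
  obtain ⟨σ, hσ⟩ := hA.exists_perm_rotate_one
  refine card_equiv σ ?_
  intro i
  simp only [mem_filter, mem_univ, true_and, hσ]
  exact List.cons_prefix_iff_prefix_rotate_one (by rw [hA.length_eq]; exact hy)

theorem prefix_iff_of_getLast?_eq [DecidableEq α] (hA : IsSortedRotFamily π A)
    (hB : IsSortedRotFamily π B) (hlast : ∀ i, (A i).getLast? = (B i).getLast?) :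
    ∀ k ≤ n, ∀ x : List α, x.length = k → ∀ i, x <+: A i ↔ x <+: B i := by
  intro k
  induction k with
  | zero => simp
  | succ k ih =>
    intro hk z hz
    have ih := ih (by omega)
    have hcard (w : List α) (hw : w.length = k + 1) :
        #{i | w <+: A i} = #{i | w <+: B i} := by
      cases w with
      | nil => simp at hw
      | cons c y =>
        have hy : y.length = k := by simpa using hw
        rw [hA.card_cons_prefix c (by omega), hB.card_cons_prefix c (by omega)]
        simp only [ih y hy, hlast]
    obtain rfl | ⟨x, d, rfl⟩ := z.eq_nil_or_concat'
    · simp at hz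
    have hx : x.length = k := by simpa using hz
    refine prefix_append_singleton_iff_of_card_eq hA.sorted hB.sorted
      (by simp [hA.length_eq, hx]; omega) (by simp [hB.length_eq, hx]; omega) (ih x hx)
      (fun e => hcard _ (by simp [hx])) d

theorem eq_of_getLast?_eq (hA : IsSortedRotFamily π A) (hB : IsSortedRotFamily π B)
    (hlast : ∀ i, (A i).getLast? = (B i).getLast?) : A = B := by
  classical
  funext i
  have hAB := hA.prefix_iff_of_getLast?_eq hB hlast n le_rfl (A i) (hA.length_eq i) i
  exact (hAB.mp List.prefix_rfl).eq_of_length (by rw [hA.length_eq, hB.length_eq])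

theorem comp_cast {m : ℕ} (hA : IsSortedRotFamily π A) (h : m = n) :
    IsSortedRotFamily π fun i => A (Fin.cast h i) := by
  subst h
  simpa using hA

end IsSortedRotFamily

namespace SortedRotMatrix

variable {s : List α} (M : SortedRotMatrix π s)

theorem length_row (i : Fin s.length) : (M.row i).length = s.length := by
  obtain ⟨r, hr⟩ := M.row_is_rot i
  rw [hr, rot_eq_rotate r.isLt.le, List.length_rotate]

theorem row_injective : Function.Injective M.row := by
  intro i j hij
  by_contra hne
  rcases lt_or_gt_of_ne hne with h | h
  · exact caLt_irrefl _ (hij ▸ M.sorted i j h)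
  · exact caLt_irrefl _ (hij ▸ M.sorted j i h)

theorem exists_row_eq_rotate_one (i : Fin s.length) : ∃ j, M.row j = (M.row i).rotate 1 := by
  obtain ⟨r, hr⟩ := M.row_is_rot i
  obtain ⟨j, hj⟩ := M.rot_is_row ⟨(r + 1) % s.length, Nat.mod_lt _ (r.pos)⟩
  refine ⟨j, ?_⟩
  rw [hj, hr, rot_eq_rotate (Nat.mod_lt _ r.pos).le, rot_eq_rotate r.isLt.le, List.rotate_rotate,
    List.rotate_mod]

theorem isSortedRotFamily : IsSortedRotFamily π M.row := by
  choose τ hτ using M.exists_row_eq_rotate_one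
  have hτinj : Function.Injective τ := fun i j h =>
    M.row_injective (List.rotate_injective 1 (by simpa only [hτ] using congrArg M.row h))
  exact ⟨M.length_row, M.sorted, Equiv.ofBijective τ (Finite.injective_iff_bijective.mp hτinj), hτ⟩

end SortedRotMatrix

end

theorem bwtStar_invertible_general {α : Type*}
    (π : List α → LinearOrder α) (s s' : List α) (hlen : s.length = s'.length)
    (M : SortedRotMatrix π s) (M' : SortedRotMatrix π s')
    (hbwt : ∀ i : Fin s.length,
      (M.row i).getLast? = (M'.row (Fin.cast hlen i)).getLast?)
    (i : Fin s.length) (i' : Fin s'.length)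
    (hi : M.row i = s) (hi' : M'.row i' = s') (hii : (i : ℕ) = (i' : ℕ)) :
    s = s' := by
  have hrows : M.row = fun j => M'.row (Fin.cast hlen j) :=
    M.isSortedRotFamily.eq_of_getLast?_eq (M'.isSortedRotFamily.comp_cast hlen) hbwt
  calc s = M.row i := hi.symm
    _ = M'.row (Fin.cast hlen i) := congrFun hrows i
    _ = M'.row i' := congrArg M'.row (Fin.ext hii)
    _ = s' := hi'

/-- A primitive string is uniquely determined by its context adaptive BWT
together with the row index of the string itself in the sorted rotation
matrix: if `BWT*(s) = BWT*(s')` and the row indices of `s` in `M*(s)` and of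
`s'` in `M*(s')` coincide, then `s = s'`. -/
theorem bwtStar_invertible {α : Type*} [Fintype α] [Nonempty α] [DecidableEq α]
    (π : List α → LinearOrder α) (s s' : List α) (hlen : s.length = s'.length)
    (hp : IsPrimitive s) (hp' : IsPrimitive s')
    (M : SortedRotMatrix π s) (M' : SortedRotMatrix π s')
    (hbwt : ∀ i : Fin s.length,
      (M.row i).getLast? = (M'.row (Fin.cast hlen i)).getLast?)
    (i : Fin s.length) (i' : Fin s'.length)
    (hi : M.row i = s) (hi' : M'.row i' = s') (hii : (i : ℕ) = (i' : ℕ)) :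
    s = s' :=
  bwtStar_invertible_general π s s' hlen M M' hbwt i i' hi hi' hii
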